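/- Let T be a deterministic single-tape Turing machine that halts on input w in N steps, let out denote the maximal nonblank prefix of the final tape ξ_N, and let the full generated string be Trace_N · ⟨SEP⟩ · Annotate(out) · ⟨EOS⟩, where Trace_N is the concatenation of the N simulation blocks of 4 tokens each and Annotate interleaves each symbol with a signpost token. Then the length of the full generated string equals 4N + 2 + 2·|out|, and this is at most 6·(N + |w|) + 2. -/
import Mathlib


/-- A head movement direction of a Turing machine: left, right, or stay. -/
inductive Dir : Type
  | L : Dir
  | R : Dir
  | S : Dir

/-- A deterministic single-tape Turing machine with state type `Q` and tape alphabet `Γ`: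
a blank symbol, an initial state, a set of halting states (as a Boolean predicate), and a
transition function giving the new state, the symbol written, and the head movement.
(The value of `trans` on halting states is irrelevant: it is never used.) -/
structure TM (Q Γ : Type*) where
  blank : Γ
  start : Q
  halt : Q → Bool
  trans : Q → Γ → Q × Γ × Dir

/-- A configuration of a single-tape Turing machine: current state, head position in
`ℕ` (only positions `≥ 1` are used; the tape is one-sided), and tape contents. -/
structure Cfg (Q Γ : Type*) where
  q : Q
  head : ℕ
  tape : ℕ → Γ

variable {Q Γ : Type*}

/-- One step of the Turing machine: if the state is halting the configuration is
unchanged; otherwise apply the transition function, write the new symbol at the head,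
and move the head (clamped at cell `1` on a left move). -/
def TM.step (T : TM Q Γ) (c : Cfg Q Γ) : Cfg Q Γ :=
  if T.halt c.q then c
  else
    let t := T.trans c.q (c.tape c.head)
    { q := t.1
      head :=
        match t.2.2 with
        | Dir.L => max (c.head - 1) 1
        | Dir.R => c.head + 1
        | Dir.S => c.head
      tape := Function.update c.tape c.head t.2.1 }

/-- The initial configuration on input `w`: initial state, head at cell `1`, and the tape
containing `w` in cells `1, …, |w|` and blanks elsewhere. -/
def TM.initCfg (T : TM Q Γ) (w : List Γ) : Cfg Q Γ where
  q := T.start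
  head := 1
  tape := fun r => if h : 1 ≤ r ∧ r ≤ w.length then w.get ⟨r - 1, by omega⟩ else T.blank

/-- The configuration of `T` on input `w` after `m` steps. -/
def TM.run (T : TM Q Γ) (w : List Γ) (m : ℕ) : Cfg Q Γ :=
  T.step^[m] (T.initCfg w)

/-- The trace alphabet of the value-change Turing-machine simulation: state tokens,
the block separator `$`, the `KEEP` token, `WRITE(σ→τ)` tokens, signpost tokens `c_r`
(one per tape cell), tape-symbol tokens (used when emitting the annotated output), and
the distinguished symbols `⟨SEP⟩` and `⟨EOS⟩`. -/
inductive Tok (Q Γ : Type*) : Type _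
  | state : Q → Tok Q Γ
  | dollar : Tok Q Γ
  | keep : Tok Q Γ
  | write : Γ → Γ → Tok Q Γ
  | sign : ℕ → Tok Q Γ
  | symb : Γ → Tok Q Γ
  | SEP : Tok Q Γ
  | EOS : Tok Q Γ
deriving DecidableEq

variable [DecidableEq Γ]

/-- The `m`-th block of the simulation trace: the 4-token string
`(q_m, c_{η_m}, $, e_m)` where `e_m = KEEP` if the symbol under the head is unchanged by
step `m` and `e_m = WRITE(ξ_m(η_m) → ξ_{m+1}(η_m))` otherwise. -/
def TM.block (T : TM Q Γ) (w : List Γ) (m : ℕ) : List (Tok Q Γ) :=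
  [Tok.state (T.run w m).q, Tok.sign (T.run w m).head, Tok.dollar,
    if (T.run w (m + 1)).tape (T.run w m).head = (T.run w m).tape (T.run w m).head then
      Tok.keep
    else
      Tok.write ((T.run w m).tape (T.run w m).head)
        ((T.run w (m + 1)).tape (T.run w m).head)]

/-- `Trace_m := B₀ B₁ ⋯ B_{m−1}`, the concatenation of the first `m` simulation blocks;
a string of length `4m`. -/
def TM.trace (T : TM Q Γ) (w : List Γ) (m : ℕ) : List (Tok Q Γ) :=
  (List.range m).flatMap (T.block w)

/-- `annotateTokFrom u i`: interleave the symbols of `u` with signposts `c_i, c_{i+1}, …`. -/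
def annotateTokFrom : List Γ → ℕ → List (Tok Q Γ)
  | [], _ => []
  | a :: t, i => Tok.symb a :: Tok.sign i :: annotateTokFrom t (i + 1)

/-- `Annotate(u₁ ⋯ u_L) = u₁ c₁ u₂ c₂ ⋯ u_L c_L`, as a string of trace tokens. -/
def annotateTok (u : List Γ) : List (Tok Q Γ) :=
  annotateTokFrom u 1

lemma TM.trace_length (T : TM Q Γ) (w : List Γ) (N : ℕ) : (T.trace w N).length = 4 * N := by
  induction N with
  | zero => simp [TM.trace]
  | succ n ih =>
    simp only [TM.trace, List.range_succ, List.flatMap_append]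
    simp only [TM.trace] at ih
    simp [ih, TM.block]; ring

lemma annotateTokFrom_length (u : List Γ) : ∀ i, (annotateTokFrom u i : List (Tok Q Γ)).length = 2 * u.length := by
  induction u with
  | nil => intro i; simp [annotateTokFrom]
  | cons a t ih => intro i; simp [annotateTokFrom, ih]; ring

lemma TM.head_le (T : TM Q Γ) (w : List Γ) : ∀ m, (T.run w m).head ≤ m + 1 := by
  intro m
  induction m with
  | zero => simp [TM.run, TM.initCfg]
  | succ m ih =>
    have : T.run w (m + 1) = T.step (T.run w m) := by
      simp [TM.run, Function.iterate_succ_apply']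
    rw [this, TM.step]
    split
    · omega
    · dsimp only
      rcases (T.trans (T.run w m).q ((T.run w m).tape (T.run w m).head)).2.2 <;> simp <;> omega

lemma TM.tape_stable (T : TM Q Γ) (w : List Γ) : ∀ m r, m < r →
    (T.run w m).tape r = (T.initCfg w).tape r := by
  intro m
  induction m with
  | zero => intro r _; rfl
  | succ m ih =>
    intro r hr
    have hstep : T.run w (m + 1) = T.step (T.run w m) := by
      simp [TM.run, Function.iterate_succ_apply']
    have hhead := T.head_le w m
    rw [hstep, TM.step]
    split
    · exact ih r (by omega)
    · dsimp only
      rw [Function.update_of_ne (by omega)]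
      exact ih r (by omega)

/-- **Length of the full generated string.**
Suppose `T` halts on input `w` in `N` steps, and let `out` be the maximal nonblank prefix
of the final tape `ξ_N`, i.e. `out = ξ_N(1) ⋯ ξ_N(L)` where `L` is the least number such
that every cell beyond `L` is blank.  Then the full generated string
`Trace_N · ⟨SEP⟩ · Annotate(out) · ⟨EOS⟩` has length `4N + 2 + 2·|out|`, which is at most
`6·(N + |w|) + 2`. -/
theorem TM.generated_length [Fintype Q] [Fintype Γ]
    (T : TM Q Γ) (w : List Γ) (N : ℕ)
    (hhalt : T.halt (T.run w N).q = true)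
    (hmin : ∀ m < N, T.halt (T.run w m).q = false)
    (L : ℕ) (hL : IsLeast {L : ℕ | ∀ r > L, (T.run w N).tape r = T.blank} L)
    (out : List Γ) (hout : out = (List.range L).map (fun i => (T.run w N).tape (i + 1))) :
    (T.trace w N ++ [Tok.SEP] ++ annotateTok out ++ [Tok.EOS]).length
        = 4 * N + 2 + 2 * out.length ∧
    (T.trace w N ++ [Tok.SEP] ++ annotateTok out ++ [Tok.EOS]).length
        ≤ 6 * (N + w.length) + 2 := by
  have htrace : (T.trace w N).length = 4 * N := TM.trace_length T w N
  have hann : (annotateTok out : List (Tok Q Γ)).length = 2 * out.length := by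
    simp [annotateTok, annotateTokFrom_length]
  have hlen : (T.trace w N ++ [Tok.SEP] ++ annotateTok out ++ [Tok.EOS]).length
      = 4 * N + 2 + 2 * out.length := by
    simp [htrace, hann]; ring
  refine ⟨hlen, ?_⟩
  have houtlen : out.length = L := by simp [hout]
  have hLbound : L ≤ N + w.length := by
    apply hL.2
    intro r hr
    rw [T.tape_stable w N r (by omega), TM.initCfg]
    simp only
    rw [dif_neg (by omega)]
  rw [hlen]
  omega
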